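/- arXiv:1702.08321 — 3 statements merged into one kernel-verified Lean document; each statement's English description precedes it below -/
import Mathlib

section
/- For even product p·m (p even or m even, p,m ≥ 1), ∑_{k=1}^{∞} artanh(F_{pm}/F_{p(2k+m)}) = ∑_{k=1}^{m} artanh(φ^{-2pk}), where φ is the golden ratio and F the Fibonacci sequence. -/
noncomputable def phi : ℝ := (1 + Real.sqrt 5) / 2

noncomputable def artanh (x : ℝ) : ℝ := (1 / 2) * Real.log ((1 + x) / (1 - x))

/-!
For even `n`, Binet's formula reads `√5 F_n = φ^n - φ^(-n)`. Combined with the addition formula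
`artanh x - artanh y = artanh ((x - y) / (1 - x y))` this gives, for `pm` even and `k ≥ 1`,
`artanh (F_{pm} / F_{p(2k+m)}) = artanh φ^(-2pk) - artanh φ^(-2p(k+m))`,
so the series telescopes with shift `m`; its terms are nonnegative because `artanh` is monotone,
and the tail vanishes because `φ^(-2pk) → 0`.
-/

open Filter Finset Topology

theorem hasSum_sub_add_of_tendsto_zero {f : ℕ → ℝ} (hf : Tendsto f atTop (𝓝 0)) (m : ℕ)
    (hle : ∀ n, f (n + m) ≤ f n) :
    HasSum (fun n => f n - f (n + m)) (∑ i ∈ range m, f i) := by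
  rw [hasSum_iff_tendsto_nat_of_nonneg (fun n => sub_nonneg.2 (hle n))]
  have hpartial : ∀ N, ∑ n ∈ range N, (f n - f (n + m)) =
      ∑ i ∈ range m, f i - ∑ i ∈ range m, f (N + i) := by
    intro N
    have h₁ := sum_range_add f N m
    have h₂ := sum_range_add f m N
    simp only [add_comm m N, add_comm m] at h₂
    rw [sum_sub_distrib]
    linarith
  have htail : Tendsto (fun N => ∑ i ∈ range m, f (N + i)) atTop (𝓝 0) := by
    simpa using tendsto_finsetSum (range m) fun i _ => hf.comp (tendsto_add_atTop_nat i)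
  simpa [hpartial] using htail.const_sub (∑ i ∈ range m, f i)

theorem artanh_eq_real_artanh {x : ℝ} (hx : x ∈ Set.Icc (-1) 1) : artanh x = Real.artanh x :=
  (Real.artanh_eq_half_log hx).symm

theorem artanh_zero : artanh 0 = 0 := by simp [artanh]

theorem continuousAt_artanh_zero : ContinuousAt artanh 0 := by
  unfold artanh
  fun_prop (disch := norm_num)

theorem artanh_sub_artanh {x y : ℝ} (hx : |x| < 1) (hy : |y| < 1) :
    artanh x - artanh y = artanh ((x - y) / (1 - x * y)) := by
  obtain ⟨hx₁, hx₂⟩ := abs_lt.1 hx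
  obtain ⟨hy₁, hy₂⟩ := abs_lt.1 hy
  have hxy : 0 < 1 - x * y := by nlinarith
  have hquot : (1 + (x - y) / (1 - x * y)) / (1 - (x - y) / (1 - x * y)) =
      (1 + x) / (1 - x) / ((1 + y) / (1 - y)) := by
    field_simp
    rw [div_eq_div_iff (by nlinarith) (by nlinarith)]
    ring
  unfold artanh
  have hpos : ∀ z : ℝ, -1 < z → z < 1 → 0 < (1 + z) / (1 - z) := fun z h₁ h₂ =>
    div_pos (by linarith) (by linarith)
  rw [hquot, Real.log_div (hpos x hx₁ hx₂).ne' (hpos y hy₁ hy₂).ne']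
  ring

theorem phi_eq_goldenRatio : phi = Real.goldenRatio := rfl

theorem one_lt_phi : 1 < phi := Real.one_lt_goldenRatio

theorem phi_zpow_neg_mem_Ioo {n : ℕ} (hn : 0 < n) : phi ^ (-(n : ℤ)) ∈ Set.Ioo 0 1 :=
  ⟨zpow_pos (zero_lt_one.trans one_lt_phi) _,
    zpow_lt_one_of_neg₀ one_lt_phi (by omega)⟩

theorem artanh_phi_zpow_neg_le {n n' : ℕ} (hn : 0 < n) (hnn' : n ≤ n') :
    artanh (phi ^ (-(n' : ℤ))) ≤ artanh (phi ^ (-(n : ℤ))) := by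
  have h := phi_zpow_neg_mem_Ioo hn
  have h' := phi_zpow_neg_mem_Ioo (hn.trans_le hnn')
  rw [artanh_eq_real_artanh ⟨by linarith [h.1], h.2.le⟩,
    artanh_eq_real_artanh ⟨by linarith [h'.1], h'.2.le⟩]
  exact Real.artanh_le_artanh (by linarith [h'.1]) h.2
    (zpow_le_zpow_right₀ one_lt_phi.le (by omega))

theorem tendsto_artanh_phi_zpow_neg :
    Tendsto (fun n : ℕ => artanh (phi ^ (-(n : ℤ)))) atTop (𝓝 0) := by
  have hpow : Tendsto (fun n : ℕ => phi ^ (-(n : ℤ))) atTop (𝓝 0) := by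
    simpa [zpow_neg, zpow_natCast, inv_pow] using
      tendsto_pow_atTop_nhds_zero_of_lt_one (inv_nonneg.2 (zero_le_one.trans one_lt_phi.le))
        (inv_lt_one_of_one_lt₀ one_lt_phi)
  rw [← artanh_zero]
  exact continuousAt_artanh_zero.tendsto.comp hpow

theorem fib_eq_of_even {n : ℕ} (hn : Even n) :
    (Nat.fib n : ℝ) = (phi ^ n - phi ^ (-(n : ℤ))) / √5 := by
  rw [Real.coe_fib_eq, zpow_neg, zpow_natCast, phi_eq_goldenRatio, ← inv_pow,
    Real.inv_goldenRatio, neg_pow, hn.neg_one_pow, one_mul]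

theorem fib_div_fib_add_two_mul {a b : ℕ} (ha : Even a) (hb : 0 < b) :
    (Nat.fib a : ℝ) / Nat.fib (a + 2 * b) =
      (phi ^ (-((2 * b : ℕ) : ℤ)) - phi ^ (-((2 * (a + b) : ℕ) : ℤ))) /
        (1 - phi ^ (-((2 * b : ℕ) : ℤ)) * phi ^ (-((2 * (a + b) : ℕ) : ℤ))) := by
  have hphi : phi ≠ 0 := (zero_lt_one.trans one_lt_phi).ne'
  have hN : 0 < Nat.fib (a + 2 * b) := Nat.fib_pos.2 (by omega)
  have hden : phi ^ (-((2 * b : ℕ) : ℤ)) * phi ^ (-((2 * (a + b) : ℕ) : ℤ)) < 1 :=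
    mul_lt_one_of_nonneg_of_lt_one_left (phi_zpow_neg_mem_Ioo (by omega)).1.le
      (phi_zpow_neg_mem_Ioo (by omega)).2 (phi_zpow_neg_mem_Ioo (by omega)).2.le
  rw [div_eq_div_iff (by positivity) (by linarith), fib_eq_of_even ha,
    fib_eq_of_even (ha.add (even_two_mul b))]
  simp only [zpow_neg, zpow_natCast, mul_add, pow_add, pow_mul]
  field_simp
  ring

theorem artanh_fib_div_fib_add_two_mul {a b : ℕ} (ha : Even a) (hb : 0 < b) :
    artanh ((Nat.fib a : ℝ) / Nat.fib (a + 2 * b)) =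
      artanh (phi ^ (-((2 * b : ℕ) : ℤ))) - artanh (phi ^ (-((2 * (a + b) : ℕ) : ℤ))) := by
  have hx := phi_zpow_neg_mem_Ioo (n := 2 * b) (by omega)
  have hy := phi_zpow_neg_mem_Ioo (n := 2 * (a + b)) (by omega)
  rw [artanh_sub_artanh (abs_lt.2 ⟨by linarith [hx.1], hx.2⟩)
    (abs_lt.2 ⟨by linarith [hy.1], hy.2⟩), fib_div_fib_add_two_mul ha hb]

theorem stmt_9_general (p m : ℕ) (hp : 1 ≤ p) (hpm : Even (p * m)) :
    ∑' k : ℕ, artanh ((Nat.fib (p * m) : ℝ) / (Nat.fib (p * (2 * (k + 1) + m)) : ℝ)) =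
      ∑ k ∈ Finset.Icc 1 m, artanh (phi ^ (-(2 * p * k : ℤ))) := by
  set u : ℕ → ℝ := fun k => artanh (phi ^ (-((2 * p * (k + 1) : ℕ) : ℤ)))
  have hterm : ∀ k, artanh ((Nat.fib (p * m) : ℝ) / Nat.fib (p * (2 * (k + 1) + m))) =
      u k - u (k + m) := by
    intro k
    rw [show p * (2 * (k + 1) + m) = p * m + 2 * (p * (k + 1)) by ring,
      artanh_fib_div_fib_add_two_mul hpm (by positivity), show 2 * (p * (k + 1)) = 2 * p * (k + 1) by ring,
      show 2 * (p * m + p * (k + 1)) = 2 * p * (k + m + 1) by ring]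
  have hmono : ∀ k, u (k + m) ≤ u k := fun k =>
    artanh_phi_zpow_neg_le (by positivity) (by gcongr; omega)
  have hlim : Tendsto u atTop (𝓝 0) :=
    tendsto_artanh_phi_zpow_neg.comp <|
      tendsto_atTop_mono (fun k => show k ≤ _ by nlinarith) tendsto_id
  rw [tsum_congr hterm, (hasSum_sub_add_of_tendsto_zero hlim m hmono).tsum_eq, range_eq_Ico,
    sum_Ico_add' (fun k => artanh (phi ^ (-((2 * p * k : ℕ) : ℤ)))), zero_add,
    Ico_add_one_right_eq_Icc]
  push_cast
  rfl

theorem stmt_9 (p m : ℕ) (hp : 1 ≤ p) (hm : 1 ≤ m) (hpm : Even (p * m)) :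
    ∑' k : ℕ, artanh ((Nat.fib (p * m) : ℝ) / (Nat.fib (p * (2 * (k + 1) + m)) : ℝ)) =
      ∑ k ∈ Finset.Icc 1 m, artanh (phi ^ (-(2 * p * k : ℤ))) :=
  stmt_9_general p m hp hpm
end

section
/- For all positive integers q, n, ∏_{k=1}^{∞} (L_{(2n-1)(2k+2q-1)} + L_{(2n-1)(2q-1)})/(L_{(2n-1)(2k+2q-1)} - L_{(2n-1)(2q-1)}) = √5 · ∏_{k=1}^{q} F_{(2k-1)(2n-1)}/L_{(2k-1)(2n-1)} · ∏_{k=1}^{q-1} L_{2k(2n-1)}/F_{2k(2n-1)}. -/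
/-!
For odd `m` put `b = ψ ^ (2m) = φ ^ (-2m) ∈ (0, 1)`. By Binet's formulas both
`√5 F_{jm} / L_{jm}` (for odd `j`) and `L_{jm} / (√5 F_{jm})` (for even `j`) equal
`c_j = (1 + b^j) / (1 - b^j)`, i.e. `coth (j m log φ)`. Writing `r = 2q - 1`, the factor of the
infinite product with `K = k + 1` is `c_K / c_{K+r}`, so the product telescopes to `c_1 ⋯ c_r`,
because `c_j → 1`; it converges unconditionally since all factors are at least `1`. Sorting
`c_1 ⋯ c_r` by parity of the index gives the right-hand side, the powers of `√5` cancelling down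
to one.
-/

def lucas : ℕ → ℕ
  | 0 => 2
  | 1 => 1
  | n + 2 => lucas n + lucas (n + 1)

open Real Filter Finset Topology goldenRatio

lemma hasProd_of_one_le_of_tendsto_prod_range {f : ℕ → ℝ} {a : ℝ} (hf : ∀ k, 1 ≤ f k)
    (h : Tendsto (fun n => ∏ k ∈ range n, f k) atTop (𝓝 a)) : HasProd f a := by
  have ha : 0 < a := one_pos.trans_le (ge_of_tendsto' h fun n => one_le_prod fun k _ => hf k)
  have hf0 : ∀ k, 0 < f k := fun k => one_pos.trans_le (hf k)
  have hlog : HasSum (fun k => log (f k)) (log a) := by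
    rw [hasSum_iff_tendsto_nat_of_nonneg (fun k => log_nonneg (hf k))]
    simp_rw [← Real.log_prod fun k _ => (hf0 k).ne']
    exact ((continuousAt_log ha.ne').tendsto).comp h
  simpa [exp_log ha] using hasProd_of_hasSum_log hf0 hlog

lemma tendsto_prod_range_div_shift {g : ℕ → ℝ} (hg0 : ∀ k, g k ≠ 0)
    (hg : Tendsto g atTop (𝓝 1)) (r : ℕ) :
    Tendsto (fun n => ∏ k ∈ range n, g k / g (k + r)) atTop
      (𝓝 (∏ k ∈ range r, g k)) := by
  rw [← tendsto_add_atTop_iff_nat r]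
  have htel : ∀ n, ∏ k ∈ range (n + r), g k / g (k + r)
      = (∏ k ∈ range r, g k) / ∏ k ∈ range r, g (n + (k + r)) := by
    intro n
    have hmid : ∏ k ∈ range n, g (r + k) ≠ 0 := prod_ne_zero_iff.mpr fun k _ => hg0 _
    rw [prod_div_distrib, add_comm n r, prod_range_add, add_comm r n, prod_range_add]
    simp only [add_comm _ r, add_left_comm _ r]
    field_simp
  have htail : Tendsto (fun n => ∏ k ∈ range r, g (n + (k + r))) atTop (𝓝 1) := by
    rw [← prod_const_one (s := range r)]
    exact tendsto_finsetProd _ fun k _ => hg.comp (tendsto_add_atTop_nat (k + r))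
  have hlim := (tendsto_const_nhds (x := ∏ k ∈ range r, g k)).div htail one_ne_zero
  rw [div_one] at hlim
  exact hlim.congr fun n => (htel n).symm

/-- For `b = exp (-2θ)` this is `coth (j θ)`. -/
noncomputable def cothSeq {F : Type*} [Field F] (b : F) (j : ℕ) : F := (1 + b ^ j) / (1 - b ^ j)

lemma cothSeq_div_cothSeq {F : Type*} [Field F] {p b : F} (hpb : p ^ 2 * b = 1) (K r : ℕ) :
    cothSeq b K / cothSeq b (K + r) =
      (p ^ (2 * K + r) * (1 - b ^ (2 * K + r)) + p ^ r * (1 - b ^ r)) /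
        (p ^ (2 * K + r) * (1 - b ^ (2 * K + r)) - p ^ r * (1 - b ^ r)) := by
  have hPB : (p ^ 2) ^ K * b ^ K = 1 := by rw [← mul_pow, hpb, one_pow]
  have hp : p ≠ 0 := by rintro rfl; simp at hpb
  have hnum : p ^ (2 * K + r) * (1 - b ^ (2 * K + r)) + p ^ r * (1 - b ^ r) =
      p ^ (2 * K + r) * ((1 + b ^ K) * (1 - b ^ (K + r))) := by
    simp only [pow_add, pow_mul]
    linear_combination (-(p ^ r * (1 - b ^ r))) * hPB
  have hden : p ^ (2 * K + r) * (1 - b ^ (2 * K + r)) - p ^ r * (1 - b ^ r) =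
      p ^ (2 * K + r) * ((1 - b ^ K) * (1 + b ^ (K + r))) := by
    simp only [pow_add, pow_mul]
    linear_combination (p ^ r * (1 - b ^ r)) * hPB
  rw [hnum, hden, mul_div_mul_left _ _ (pow_ne_zero _ hp), cothSeq, cothSeq, div_div_div_eq,
    mul_comm (1 - b ^ K)]

section cothSeq

variable {b : ℝ} (hb0 : 0 < b) (hb1 : b < 1)
include hb0 hb1

lemma one_lt_cothSeq {j : ℕ} (hj : j ≠ 0) : 1 < cothSeq b j := by
  have hbj : b ^ j < 1 := pow_lt_one₀ hb0.le hb1 hj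
  rw [cothSeq, one_lt_div (by linarith)]
  linarith [pow_pos hb0 j]

lemma cothSeq_le_cothSeq {i j : ℕ} (hi : i ≠ 0) (hij : i ≤ j) :
    cothSeq b j ≤ cothSeq b i := by
  have hbi : b ^ i < 1 := pow_lt_one₀ hb0.le hb1 hi
  have hbji : b ^ j ≤ b ^ i := pow_le_pow_of_le_one hb0.le hb1.le hij
  rw [cothSeq, cothSeq, div_le_div_iff₀ (by linarith) (by linarith)]
  nlinarith

lemma tendsto_cothSeq : Tendsto (cothSeq b) atTop (𝓝 1) := by
  have hpow := tendsto_pow_atTop_nhds_zero_of_lt_one hb0.le hb1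
  have hlim := (tendsto_const_nhds (x := (1 : ℝ)).add hpow).div
    (tendsto_const_nhds (x := (1 : ℝ)).sub hpow) (by norm_num)
  rw [add_zero, sub_zero, div_one] at hlim
  exact hlim

lemma hasProd_cothSeq_div (r : ℕ) :
    HasProd (fun k => cothSeq b (k + 1) / cothSeq b (k + 1 + r))
      (∏ k ∈ range r, cothSeq b (k + 1)) := by
  have hpos : ∀ j, 0 < cothSeq b (j + 1) := fun j =>
    one_pos.trans (one_lt_cothSeq hb0 hb1 j.succ_ne_zero)
  refine hasProd_of_one_le_of_tendsto_prod_range (fun k => ?_) ?_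
  · rw [one_le_div (by simpa only [add_right_comm] using hpos (k + r))]
    exact cothSeq_le_cothSeq hb0 hb1 k.succ_ne_zero (by omega)
  · simpa only [add_right_comm _ r 1] using tendsto_prod_range_div_shift (fun j => (hpos j).ne')
      ((tendsto_cothSeq hb0 hb1).comp (tendsto_add_atTop_nat 1)) r

end cothSeq

lemma coe_lucas (n : ℕ) : (lucas n : ℝ) = φ ^ n + ψ ^ n := by
  induction n using Nat.twoStepInduction with
  | zero => norm_num [lucas]
  | one => simp [lucas, goldenRatio_add_goldenConj]
  | more n h0 h1 =>
    rw [lucas, Nat.cast_add, h0, h1]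
    linear_combination (-φ ^ n) * goldenRatio_sq - ψ ^ n * goldenConj_sq

lemma sqrt_five_mul_coe_fib (n : ℕ) : √5 * (Nat.fib n : ℝ) = φ ^ n - ψ ^ n := by
  rw [coe_fib_eq, mul_div_cancel₀ _ (by positivity)]

lemma goldenConj_pow_mul_of_odd {m : ℕ} (hm : Odd m) (j : ℕ) :
    ψ ^ (m * j) = φ ^ (m * j) * (-ψ ^ (2 * m)) ^ j := by
  rw [pow_mul, pow_mul, ← mul_pow]
  congr 1
  rw [mul_comm 2, pow_mul, sq, mul_neg, ← mul_assoc, ← mul_pow, goldenRatio_mul_goldenConj,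
    hm.neg_one_pow]
  ring

lemma coe_lucas_mul_of_odd {m : ℕ} (hm : Odd m) (j : ℕ) :
    (lucas (m * j) : ℝ) = φ ^ (m * j) * (1 + (-ψ ^ (2 * m)) ^ j) := by
  rw [coe_lucas, goldenConj_pow_mul_of_odd hm]; ring

lemma sqrt_five_mul_coe_fib_mul_of_odd {m : ℕ} (hm : Odd m) (j : ℕ) :
    √5 * (Nat.fib (m * j) : ℝ) = φ ^ (m * j) * (1 - (-ψ ^ (2 * m)) ^ j) := by
  rw [sqrt_five_mul_coe_fib, goldenConj_pow_mul_of_odd hm]; ring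

lemma goldenConj_pow_two_mul_pos (m : ℕ) : 0 < ψ ^ (2 * m) := by
  rw [pow_mul]; exact pow_pos (pow_two_pos_of_ne_zero goldenConj_neg.ne) m

lemma goldenConj_pow_two_mul_lt_one {m : ℕ} (hm : m ≠ 0) : ψ ^ (2 * m) < 1 := by
  rw [pow_mul]
  exact pow_lt_one₀ (sq_nonneg ψ) (by nlinarith [neg_one_lt_goldenConj, goldenConj_neg]) hm

lemma lucas_add_div_lucas_sub {m r : ℕ} (hm : Odd m) (hr : Odd r) (K : ℕ) :
    ((lucas (m * (2 * K + r)) : ℝ) + lucas (m * r)) /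
        ((lucas (m * (2 * K + r)) : ℝ) - lucas (m * r)) =
      cothSeq (ψ ^ (2 * m)) K / cothSeq (ψ ^ (2 * m)) (K + r) := by
  have hpb : (φ ^ m) ^ 2 * ψ ^ (2 * m) = 1 := by
    rw [← pow_mul, mul_comm m, ← mul_pow, goldenRatio_mul_goldenConj, pow_mul]; norm_num
  rw [cothSeq_div_cothSeq hpb, coe_lucas_mul_of_odd hm, coe_lucas_mul_of_odd hm,
    ((even_two_mul K).add_odd hr).neg_pow, hr.neg_pow, ← pow_mul, ← pow_mul]
  ring_nf

lemma cothSeq_of_odd {m j : ℕ} (hm : Odd m) (hj : Odd j) :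
    cothSeq (ψ ^ (2 * m)) j = √5 * ((Nat.fib (j * m) : ℝ) / lucas (j * m)) := by
  rw [← mul_div_assoc, mul_comm j, sqrt_five_mul_coe_fib_mul_of_odd hm, coe_lucas_mul_of_odd hm,
    hj.neg_pow, mul_div_mul_left _ _ (by positivity), cothSeq, sub_neg_eq_add, ← sub_eq_add_neg]

lemma cothSeq_of_even {m j : ℕ} (hm : Odd m) (hj : Even j) :
    cothSeq (ψ ^ (2 * m)) j = (lucas (j * m) : ℝ) / Nat.fib (j * m) / √5 := by
  rw [div_div, mul_comm _ √5, mul_comm j, sqrt_five_mul_coe_fib_mul_of_odd hm,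
    coe_lucas_mul_of_odd hm, hj.neg_pow, mul_div_mul_left _ _ (by positivity), cothSeq]

lemma prod_range_cothSeq {m : ℕ} (hm : Odd m) (p : ℕ) :
    ∏ k ∈ range (2 * p + 1), cothSeq (ψ ^ (2 * m)) (k + 1) =
      √5 *
          (∏ k ∈ Icc 1 (p + 1), (Nat.fib ((2 * k - 1) * m) : ℝ) / lucas ((2 * k - 1) * m)) *
        ∏ k ∈ Icc 1 p, (lucas (2 * k * m) : ℝ) / Nat.fib (2 * k * m) := by
  induction p with
  | zero => simp [cothSeq_of_odd hm odd_one]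
  | succ p ih =>
    rw [prod_Icc_succ_top (show 1 ≤ p + 1 + 1 by omega),
      prod_Icc_succ_top (show 1 ≤ p + 1 by omega)
        (fun k => (lucas (2 * k * m) : ℝ) / Nat.fib (2 * k * m)),
      show 2 * (p + 1) + 1 = 2 * p + 1 + 1 + 1 by ring, prod_range_succ, prod_range_succ, ih,
      cothSeq_of_even hm (by simp [parity_simps]), cothSeq_of_odd hm (by simp [parity_simps]),
      show 2 * (p + 1 + 1) - 1 = 2 * p + 1 + 1 + 1 by omega,
      show 2 * p + 1 + 1 = 2 * (p + 1) by ring]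
    field_simp

theorem stmt_12 (q n : ℕ) (hq : 0 < q) (hn : 0 < n) :
    ∏' k : ℕ,
        ((lucas ((2 * n - 1) * (2 * (k + 1) + 2 * q - 1)) : ℝ) + (lucas ((2 * n - 1) * (2 * q - 1)) : ℝ)) /
          ((lucas ((2 * n - 1) * (2 * (k + 1) + 2 * q - 1)) : ℝ) - (lucas ((2 * n - 1) * (2 * q - 1)) : ℝ)) =
      Real.sqrt 5 *
        (∏ k ∈ Finset.Icc 1 q,
            (Nat.fib ((2 * k - 1) * (2 * n - 1)) : ℝ) / (lucas ((2 * k - 1) * (2 * n - 1)) : ℝ)) *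
        ∏ k ∈ Finset.Icc 1 (q - 1),
          (lucas (2 * k * (2 * n - 1)) : ℝ) / (Nat.fib (2 * k * (2 * n - 1)) : ℝ) := by
  obtain ⟨p, rfl⟩ : ∃ p, q = p + 1 := ⟨q - 1, by omega⟩
  have hm : Odd (2 * n - 1) := ⟨n - 1, by omega⟩
  have hfactor : ∀ k : ℕ,
      ((lucas ((2 * n - 1) * (2 * (k + 1) + 2 * (p + 1) - 1)) : ℝ) +
          lucas ((2 * n - 1) * (2 * (p + 1) - 1))) /
        ((lucas ((2 * n - 1) * (2 * (k + 1) + 2 * (p + 1) - 1)) : ℝ) -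
          lucas ((2 * n - 1) * (2 * (p + 1) - 1))) =
      cothSeq (ψ ^ (2 * (2 * n - 1))) (k + 1) /
        cothSeq (ψ ^ (2 * (2 * n - 1))) (k + 1 + (2 * p + 1)) := fun k => by
    rw [← lucas_add_div_lucas_sub hm (odd_two_mul_add_one p),
      show 2 * (k + 1) + 2 * (p + 1) - 1 = 2 * (k + 1) + (2 * p + 1) by omega,
      show 2 * (p + 1) - 1 = 2 * p + 1 by omega]
  rw [tprod_congr hfactor, (hasProd_cothSeq_div (goldenConj_pow_two_mul_pos _)
    (goldenConj_pow_two_mul_lt_one (by omega)) _).tprod_eq, prod_range_cothSeq hm,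
    Nat.add_sub_cancel]
end

section
/- For all positive integers q, n, ∏_{k=1}^{∞} (F_{4n(2k+q-1)} + F_{4nq})/(F_{4n(2k+q-1)} - F_{4nq}) = (1/(√5)^q) · ∏_{k=1}^{q} L_{2n(2k-1)}/F_{2n(2k-1)}. -/
open Real Filter Finset Topology
open scoped goldenRatio

section Telescoping

variable {a : ℕ → ℝ} {l : ℝ}

theorem hasProd_div_succ_of_antitone (ha : ∀ k, 0 < a k) (hanti : Antitone a) (hl : 0 < l)
    (hlim : Tendsto a atTop (𝓝 l)) : HasProd (fun k ↦ a k / a (k + 1)) (a 0 / l) := by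
  have hlog : HasSum (fun k ↦ log (a k / a (k + 1))) (log (a 0) - log l) := by
    -- Monotonicity makes the terms nonnegative, so the telescoping partial sums suffice.
    have hnonneg (k : ℕ) : 0 ≤ log (a k / a (k + 1)) :=
      log_nonneg <| (one_le_div (ha _)).2 (hanti k.le_succ)
    rw [hasSum_iff_tendsto_nat_of_nonneg hnonneg]
    refine (tendsto_const_nhds.sub (hlim.log hl.ne')).congr fun N ↦ ?_
    simp only [log_div (ha _).ne' (ha _).ne']
    exact (sum_range_sub' (fun k ↦ log (a k)) N).symm
  convert hasProd_of_hasSum_log (fun k ↦ div_pos (ha k) (ha (k + 1))) hlog using 1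
  rw [exp_sub, exp_log (ha 0), exp_log hl]

theorem prod_range_div_add_succ (ha : ∀ k, a k ≠ 0) (k q : ℕ) :
    ∏ j ∈ range q, a (k + j) / a (k + j + 1) = a k / a (k + q) := by
  induction q with
  | zero => simp [ha k]
  | succ q ih =>
    rw [prod_range_succ, ih, ← add_assoc]
    field_simp [ha (k + q)]

theorem hasProd_div_add_of_antitone (ha : ∀ k, 0 < a k) (hanti : Antitone a) (hl : 0 < l)
    (hlim : Tendsto a atTop (𝓝 l)) (q : ℕ) :
    HasProd (fun k ↦ a k / a (k + q)) ((∏ j ∈ range q, a j) / l ^ q) := by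
  have hshift (j : ℕ) : HasProd (fun k ↦ a (k + j) / a (k + j + 1)) (a j / l) := by
    have := hasProd_div_succ_of_antitone (a := fun k ↦ a (k + j)) (fun k ↦ ha _)
      (fun _ _ h ↦ hanti (by omega)) hl ((tendsto_add_atTop_iff_nat j).2 hlim)
    simpa only [add_right_comm _ 1 j, zero_add] using this
  convert hasProd_prod (s := range q) fun j _ ↦ hshift j using 1
  · funext k
    rw [prod_range_div_add_succ (fun k ↦ (ha k).ne') k q]
  · rw [prod_div_distrib, prod_const, card_range]

end Telescoping

theorem coe_lucas_eq : ∀ m : ℕ, (lucas m : ℝ) = φ ^ m + ψ ^ m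
  | 0 => by norm_num [lucas]
  | 1 => by norm_num [lucas, goldenRatio_add_goldenConj]
  | m + 2 => by
    rw [lucas, Nat.cast_add, coe_lucas_eq m, coe_lucas_eq (m + 1)]
    linear_combination φ ^ m * goldenRatio_sq + ψ ^ m * goldenConj_sq -
      (φ ^ m + ψ ^ m) / 2 * sq_sqrt (show (0 : ℝ) ≤ 5 by norm_num)

theorem lucas_pos : ∀ m : ℕ, 0 < lucas m
  | 0 => by decide
  | 1 => by decide
  | m + 2 => Nat.add_pos_left (lucas_pos m) _

theorem goldenRatio_pow_mul_goldenConj_pow_two_mul (v : ℕ) : φ ^ (2 * v) * ψ ^ (2 * v) = 1 := by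
  rw [← mul_pow, pow_mul, goldenRatio_mul_goldenConj]
  norm_num

theorem fib_add_four_mul_add_fib (u v : ℕ) :
    (Nat.fib (u + 4 * v) : ℝ) + Nat.fib u = Nat.fib (u + 2 * v) * lucas (2 * v) := by
  rw [coe_fib_eq, coe_fib_eq, coe_fib_eq, coe_lucas_eq,
    show u + 4 * v = u + 2 * v + 2 * v by ring, pow_add, pow_add, pow_add, pow_add]
  linear_combination (-(φ ^ u - ψ ^ u) / √5) * goldenRatio_pow_mul_goldenConj_pow_two_mul v

theorem fib_add_four_mul_sub_fib (u v : ℕ) :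
    (Nat.fib (u + 4 * v) : ℝ) - Nat.fib u = lucas (u + 2 * v) * Nat.fib (2 * v) := by
  rw [coe_fib_eq, coe_fib_eq, coe_fib_eq, coe_lucas_eq,
    show u + 4 * v = u + 2 * v + 2 * v by ring, pow_add, pow_add, pow_add, pow_add]
  linear_combination ((φ ^ u - ψ ^ u) / √5) * goldenRatio_pow_mul_goldenConj_pow_two_mul v

theorem lucas_mul_fib_sub_fib_mul_lucas (a w : ℕ) :
    (lucas (2 * a) : ℝ) * Nat.fib (2 * a + w) - Nat.fib (2 * a) * lucas (2 * a + w) =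
      2 * Nat.fib w := by
  rw [coe_fib_eq, coe_fib_eq, coe_fib_eq, coe_lucas_eq, coe_lucas_eq, pow_add, pow_add]
  linear_combination (2 * (φ ^ w - ψ ^ w) / √5) * goldenRatio_pow_mul_goldenConj_pow_two_mul a

theorem lucas_div_fib_pos {m : ℕ} (hm : 0 < m) : 0 < (lucas m : ℝ) / Nat.fib m :=
  div_pos (mod_cast lucas_pos m) (mod_cast Nat.fib_pos.2 hm)

theorem lucas_div_fib_add_le {a : ℕ} (ha : 0 < a) (w : ℕ) :
    (lucas (2 * a + w) : ℝ) / Nat.fib (2 * a + w) ≤ lucas (2 * a) / Nat.fib (2 * a) := by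
  have hF : (0 : ℝ) < Nat.fib (2 * a) := mod_cast Nat.fib_pos.2 (by omega)
  have hF' : (0 : ℝ) < Nat.fib (2 * a + w) := mod_cast Nat.fib_pos.2 (by omega)
  rw [div_le_div_iff₀ hF' hF]
  nlinarith [lucas_mul_fib_sub_fib_mul_lucas a w, (Nat.fib w).cast_nonneg (α := ℝ)]

theorem tendsto_lucas_div_fib :
    Tendsto (fun m ↦ (lucas m : ℝ) / Nat.fib m) atTop (𝓝 √5) := by
  have hr : Tendsto (fun m ↦ (ψ / φ) ^ m) atTop (𝓝 0) :=
    tendsto_pow_atTop_nhds_zero_of_abs_lt_one <| by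
      rw [abs_div, div_lt_one <| by positivity, abs_of_pos goldenRatio_pos, abs_lt]
      ring_nf
      bound
  have hform (m : ℕ) :
      (lucas m : ℝ) / Nat.fib m = √5 * ((1 + (ψ / φ) ^ m) / (1 - (ψ / φ) ^ m)) := by
    simp only [coe_fib_eq, coe_lucas_eq, div_pow]
    field
  have hnum : Tendsto (fun m ↦ 1 + (ψ / φ) ^ m) atTop (𝓝 (1 + 0)) := tendsto_const_nhds.add hr
  have hden : Tendsto (fun m ↦ 1 - (ψ / φ) ^ m) atTop (𝓝 (1 - 0)) := tendsto_const_nhds.sub hr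
  rw [funext hform]
  simpa using (hnum.div hden (by norm_num)).const_mul √5

theorem fib_add_four_mul_add_fib_div_sub (u v : ℕ) :
    ((Nat.fib (u + 4 * v) : ℝ) + Nat.fib u) / (Nat.fib (u + 4 * v) - Nat.fib u) =
      (lucas (2 * v) / Nat.fib (2 * v)) / (lucas (u + 2 * v) / Nat.fib (u + 2 * v)) := by
  rw [fib_add_four_mul_add_fib, fib_add_four_mul_sub_fib, div_div_div_eq]
  ring

theorem stmt_15_general (q n : ℕ) (hn : 0 < n) :
    ∏' k : ℕ,
        ((Nat.fib (4 * n * (2 * (k + 1) + q - 1)) : ℝ) + (Nat.fib (4 * n * q) : ℝ)) /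
          ((Nat.fib (4 * n * (2 * (k + 1) + q - 1)) : ℝ) - (Nat.fib (4 * n * q) : ℝ)) =
      (1 / Real.sqrt 5 ^ q) *
        ∏ k ∈ Finset.Icc 1 q,
          (lucas (2 * n * (2 * k - 1)) : ℝ) / (Nat.fib (2 * n * (2 * k - 1)) : ℝ) := by
  set g : ℕ → ℝ := fun k ↦ (lucas (2 * n * (2 * k + 1)) : ℝ) / Nat.fib (2 * n * (2 * k + 1))
  have hfactor (k : ℕ) :
      ((Nat.fib (4 * n * (2 * (k + 1) + q - 1)) : ℝ) + Nat.fib (4 * n * q)) /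
        (Nat.fib (4 * n * (2 * (k + 1) + q - 1)) - Nat.fib (4 * n * q)) = g k / g (k + q) := by
    rw [show 4 * n * (2 * (k + 1) + q - 1) = 4 * n * q + 4 * (n * (2 * k + 1)) by
      rw [show 2 * (k + 1) + q - 1 = 2 * k + q + 1 by omega]; ring,
      fib_add_four_mul_add_fib_div_sub, show 2 * (n * (2 * k + 1)) = 2 * n * (2 * k + 1) by ring,
      show 4 * n * q + 2 * n * (2 * k + 1) = 2 * n * (2 * (k + q) + 1) by ring]
  have hpos (k : ℕ) : 0 < g k := lucas_div_fib_pos (by positivity)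
  have hanti : Antitone g := antitone_nat_of_succ_le fun k ↦ by
    have := lucas_div_fib_add_le (a := n * (2 * k + 1)) (by positivity) (4 * n)
    rwa [show 2 * (n * (2 * k + 1)) + 4 * n = 2 * n * (2 * (k + 1) + 1) by ring,
      show 2 * (n * (2 * k + 1)) = 2 * n * (2 * k + 1) by ring] at this
  have hlim : Tendsto g atTop (𝓝 √5) :=
    tendsto_lucas_div_fib.comp <| tendsto_atTop_mono (fun k ↦ show k ≤ _ by nlinarith) tendsto_id
  have hRHS : ∏ k ∈ Icc 1 q, (lucas (2 * n * (2 * k - 1)) : ℝ) / Nat.fib (2 * n * (2 * k - 1)) =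
      ∏ j ∈ range q, g j := by
    rw [← Ico_add_one_right_eq_Icc, prod_Ico_eq_prod_range, Nat.add_sub_cancel]
    refine prod_congr rfl fun j _ ↦ ?_
    rw [show 2 * (1 + j) - 1 = 2 * j + 1 by omega]
  rw [tprod_congr hfactor, (hasProd_div_add_of_antitone hpos hanti (by positivity) hlim q).tprod_eq,
    hRHS, one_div_mul_eq_div]

theorem stmt_15 (q n : ℕ) (hq : 0 < q) (hn : 0 < n) :
    ∏' k : ℕ,
        ((Nat.fib (4 * n * (2 * (k + 1) + q - 1)) : ℝ) + (Nat.fib (4 * n * q) : ℝ)) /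
          ((Nat.fib (4 * n * (2 * (k + 1) + q - 1)) : ℝ) - (Nat.fib (4 * n * q) : ℝ)) =
      (1 / Real.sqrt 5 ^ q) *
        ∏ k ∈ Finset.Icc 1 q,
          (lucas (2 * n * (2 * k - 1)) : ℝ) / (Nat.fib (2 * n * (2 * k - 1)) : ℝ) :=
  stmt_15_general q n hn
end
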